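/- arXiv:1909.04907 — 2 statements merged into one kernel-verified Lean document; each statement's English description precedes it below -/
import Mathlib

section
/- For all representations V, W of Γ and all i ≥ 0, there is an isomorphism Ext^i_Q(Φ(V), Φ(W)) ≅ Ext^i_Γ(V, W), where Ext_Q denotes Ext in the category Rep⁰(Γ̂_d) ≅ mod(Q). -/
/-!
Representations of a quiver `Γ` are modelled as functors `Paths Γ ⥤ ModuleCat ℂ`.
The category `Rep⁰(Γ̂_d) ≅ mod(Q)`, `Q = ℂΓ ⊗ ℂL_d`, of representations of the extended
quiver `Γ̂_d` satisfying the commutativity relations, is modelled as the functor category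
`Paths Γ × Paths (L_d) ⥤ ModuleCat ℂ`.
-/

open CategoryTheory CategoryTheory.Limits

/-- The linear quiver `L_d` with `d` vertices and one arrow `r → r+1` for each `r`. -/
structure Ld (d : ℕ) where
  val : Fin d

instance (d : ℕ) : Quiver (Ld d) := ⟨fun a b => PLift (a.val.1 + 1 = b.val.1)⟩

/-- The category of representations of the quiver `Γ`. -/
abbrev RepCat (Γ : Type) [Quiver.{1} Γ] : Type 1 := Paths Γ ⥤ ModuleCat.{0} ℂ

/-- The category `Rep⁰(Γ̂_d) ≅ mod(Q)` of commutative-square representations of the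
extended quiver `Γ̂_d`. -/
abbrev Rep0Cat (Γ : Type) [Quiver.{1} Γ] (d : ℕ) : Type 1 :=
  Paths Γ × Paths (Ld d) ⥤ ModuleCat.{0} ℂ

/-- The functor `Φ : Rep(Γ) → Rep⁰(Γ̂_d)`: `Φ(V)_{(i,r)} = V_i`, with the structure maps of
`V` on each level `r` and identity transition maps between consecutive levels. -/
noncomputable def Phi (Γ : Type) [Quiver.{1} Γ] (d : ℕ) : RepCat Γ ⥤ Rep0Cat Γ d :=
  (Functor.whiskeringLeft (Paths Γ × Paths (Ld d)) (Paths Γ) (ModuleCat.{0} ℂ)).obj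
    (CategoryTheory.Prod.fst (Paths Γ) (Paths (Ld d)))

/-!
`Φ` is restriction along the projection `Γ × L_d → Γ`. The vertex `0` is initial in the path
category of `L_d`, so `c ↦ (c, 0)` is left adjoint to this projection with identity unit;
restricting along it gives an exact right adjoint of `Φ` (evaluation at level `0`) with
invertible unit. An adjunction between exact functors descends to derived categories, still with
invertible unit, so the derived functor of `Φ` is fully faithful, and the map
`Ext^i_Γ(V, W) → Ext^i_Q(Φ V, Φ W)` it induces is bijective.
-/

namespace CategoryTheory

section Preadditive

variable {C D : Type*} [Category C] [Category D] [Preadditive C] [Preadditive D]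
  {F : C ⥤ D} {G : D ⥤ C} [F.Additive] [G.Additive]

def Adjunction.mapHomologicalComplex (adj : F ⊣ G) {ι : Type*} (c : ComplexShape ι) :
    F.mapHomologicalComplex c ⊣ G.mapHomologicalComplex c where
  unit.app K := { f i := adj.unit.app (K.X i), comm' _ _ _ := (adj.unit.naturality _).symm }
  unit.naturality _ _ φ := by ext i; exact adj.unit.naturality (φ.f i)
  counit.app K := { f i := adj.counit.app (K.X i), comm' _ _ _ := (adj.counit.naturality _).symm }
  counit.naturality _ _ φ := by ext i; exact adj.counit.naturality (φ.f i)
  left_triangle_components K := by ext i; exact adj.left_triangle_components (K.X i)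
  right_triangle_components K := by ext i; exact adj.right_triangle_components (K.X i)

instance Adjunction.isIso_mapHomologicalComplex_unit (adj : F ⊣ G) [IsIso adj.unit] {ι : Type*}
    (c : ComplexShape ι) : IsIso (adj.mapHomologicalComplex c).unit := by
  have (K : HomologicalComplex C c) : IsIso ((adj.mapHomologicalComplex c).unit.app K) :=
    have (i : ι) : IsIso (((adj.mapHomologicalComplex c).unit.app K).f i) :=
      inferInstanceAs (IsIso (adj.unit.app (K.X i)))
    HomologicalComplex.Hom.isIso_of_components _
  exact NatIso.isIso_of_isIso_app _

end Preadditive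

section Abelian

universe w w'

variable {C D : Type*} [Category C] [Category D] [Abelian C] [Abelian D]
  (F : C ⥤ D) [F.Additive] [PreservesFiniteLimits F] [PreservesFiniteColimits F]

noncomputable instance Functor.catCommSqMapDerivedCategory [HasDerivedCategory C]
    [HasDerivedCategory D] : CatCommSq (F.mapHomologicalComplex (.up ℤ)) DerivedCategory.Q
      DerivedCategory.Q F.mapDerivedCategory :=
  ⟨F.mapDerivedCategoryFactors.symm⟩

open Abelian in
theorem Functor.mapExtAddHom_bijective_of_fullyFaithful [HasDerivedCategory C]
    [HasDerivedCategory D] [HasExt.{w} C] [HasExt.{w'} D]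
    (hF : F.mapDerivedCategory.FullyFaithful) (X Y : C) (n : ℕ) :
    Function.Bijective (F.mapExtAddHom X Y n) := by
  let α := (F.mapDerivedCategorySingleFunctor 0).app X
  let β := (F.mapDerivedCategory.commShiftIso (n : ℤ)).app
      ((DerivedCategory.singleFunctor C 0).obj Y) ≪≫
    (shiftFunctor (DerivedCategory D) (n : ℤ)).mapIso ((F.mapDerivedCategorySingleFunctor 0).app Y)
  have hfactor : ⇑(F.mapExtAddHom X Y n) =
      Ext.homEquiv.symm ∘ α.homCongr β ∘ F.mapDerivedCategory.map ∘ Ext.homEquiv := by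
    funext e
    apply Ext.homEquiv.injective
    simp [α, β, Ext.mapExactFunctor_hom, Iso.homCongr, ShiftedHom.map]
  rw [hfactor]
  exact Ext.homEquiv.symm.bijective.comp
    ((α.homCongr β).bijective.comp ((hF.map_bijective _ _).comp Ext.homEquiv.bijective))

namespace Adjunction

variable {F} {G : D ⥤ C} [G.Additive] [PreservesFiniteLimits G] [PreservesFiniteColimits G]

noncomputable def mapDerivedCategory [HasDerivedCategory C] [HasDerivedCategory D]
    (adj : F ⊣ G) : F.mapDerivedCategory ⊣ G.mapDerivedCategory :=
  (adj.mapHomologicalComplex _).localization DerivedCategory.Q (HomologicalComplex.quasiIso _ _)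
    DerivedCategory.Q (HomologicalComplex.quasiIso _ _) _ _

instance isIso_mapDerivedCategory_unit [HasDerivedCategory C] [HasDerivedCategory D]
    (adj : F ⊣ G) [IsIso adj.unit] : IsIso adj.mapDerivedCategory.unit := by
  have (X : DerivedCategory C) : IsIso (adj.mapDerivedCategory.unit.app X) := by
    rw [← NatTrans.isIso_app_iff_of_iso _ (DerivedCategory.Q.objObjPreimageIso X),
      mapDerivedCategory, localization_unit_app]
    infer_instance
  exact NatIso.isIso_of_isIso_app _

theorem mapExtAddHom_bijective (adj : F ⊣ G) [IsIso adj.unit] [HasExt.{w} C] [HasExt.{w'} D]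
    (X Y : C) (n : ℕ) : Function.Bijective (F.mapExtAddHom X Y n) :=
  letI := HasDerivedCategory.standard C
  letI := HasDerivedCategory.standard D
  F.mapExtAddHom_bijective_of_fullyFaithful adj.mapDerivedCategory.fullyFaithfulLOfIsIsoUnit X Y n

end Adjunction

end Abelian

def Adjunction.prodConstOfIsInitial (C : Type*) {D : Type*} [Category C] [Category D] {z : D}
    (hz : IsInitial z) : (𝟭 C).prod' ((Functor.const C).obj z) ⊣ Prod.fst C D :=
  Adjunction.mkOfHomEquiv
    { homEquiv X Y :=
        { toFun f := f.1
          invFun g := (g, hz.to Y.2)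
          left_inv f := Prod.ext rfl (hz.hom_ext _ _)
          right_inv _ := rfl } }

instance Adjunction.isIso_prodConstOfIsInitial_unit (C : Type*) {D : Type*} [Category C]
    [Category D] {z : D} (hz : IsInitial z) : IsIso (prodConstOfIsInitial C hz).unit := by
  have (X : C) : IsIso ((prodConstOfIsInitial C hz).unit.app X) := by
    simp only [prodConstOfIsInitial, mkOfHomEquiv_unit_app, Equiv.coe_fn_mk, prod_id_fst]
    exact IsIso.id _
  exact NatIso.isIso_of_isIso_app _

instance Adjunction.isIso_whiskerLeft_unit {C D : Type*} [Category C] [Category D] (E : Type*)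
    [Category E] {F : C ⥤ D} {G : D ⥤ C} (adj : F ⊣ G) [IsIso adj.unit] :
    IsIso (adj.whiskerLeft E).unit := by
  have (V : C ⥤ E) : IsIso ((adj.whiskerLeft E).unit.app V) := by
    dsimp [Adjunction.whiskerLeft]; infer_instance
  exact NatIso.isIso_of_isIso_app _

end CategoryTheory

namespace Ld

variable {d : ℕ}

lemma val_succ_of_hom {a b : Ld d} (e : a ⟶ b) : a.val.1 + 1 = b.val.1 := e.down

instance (a b : Ld d) : Subsingleton (a ⟶ b) := ⟨fun ⟨_⟩ ⟨_⟩ => rfl⟩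

lemma val_add_length {a b : Ld d} (p : Quiver.Path a b) : a.val.1 + p.length = b.val.1 := by
  induction p with
  | nil => rfl
  | cons p e ih => have := val_succ_of_hom e; simp only [Quiver.Path.length_cons]; omega

lemma ext {a b : Ld d} (h : a.val.1 = b.val.1) : a = b := by
  cases a; cases b; congr; exact Fin.ext h

lemma path_eq {a b : Ld d} (p q : Quiver.Path a b) : p = q := by
  revert q
  induction p with
  | nil =>
    rintro (_ | ⟨q, e⟩)
    · rfl
    · have := val_add_length q; have := val_succ_of_hom e; omega
  | @cons x _ p e ih =>
    intro q
    cases q with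
    | nil => have := val_add_length p; have := val_succ_of_hom e; omega
    | @cons y _ q f =>
      obtain rfl : y = x := ext (by have := val_succ_of_hom e; have := val_succ_of_hom f; omega)
      obtain rfl := Subsingleton.elim e f
      rw [ih q]

def pathFromZero (hd : 0 < d) : ∀ (k : ℕ) (hk : k < d),
    Quiver.Path (⟨⟨0, hd⟩⟩ : Ld d) ⟨⟨k, hk⟩⟩
  | 0, _ => .nil
  | k + 1, hk => (pathFromZero hd k (by omega)).cons ⟨rfl⟩

def isInitialZero (hd : 0 < d) : IsInitial ((Paths.of (Ld d)).obj ⟨⟨0, hd⟩⟩) :=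
  IsInitial.ofUniqueHom (fun b : Ld d => pathFromZero hd b.val.1 b.val.2) (fun _ _ => path_eq _ _)

end Ld

/-- For all representations `V, W` of `Γ` and all `i ≥ 0`, there is an
isomorphism `Ext^i_Q(Φ(V), Φ(W)) ≅ Ext^i_Γ(V, W)` (of abelian groups). -/
theorem statement3 (Γ : Type) [Quiver.{1} Γ] [Fintype Γ] [∀ a b : Γ, Fintype (a ⟶ b)]
    (d : ℕ) (hd : 0 < d) (V W : RepCat Γ) (i : ℕ) :
    letI := HasDerivedCategory.standard (RepCat Γ)
    letI := hasExt_of_hasDerivedCategory (RepCat Γ)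
    letI := HasDerivedCategory.standard (Rep0Cat Γ d)
    letI := hasExt_of_hasDerivedCategory (Rep0Cat Γ d)
    Nonempty (Abelian.Ext ((Phi Γ d).obj V) ((Phi Γ d).obj W) i ≃+ Abelian.Ext V W i) := by
  let := HasDerivedCategory.standard (RepCat Γ)
  let := hasExt_of_hasDerivedCategory (RepCat Γ)
  let := HasDerivedCategory.standard (Rep0Cat Γ d)
  let := hasExt_of_hasDerivedCategory (Rep0Cat Γ d)
  let adj := (Adjunction.prodConstOfIsInitial (Paths Γ) (Ld.isInitialZero hd)).whiskerLeft
    (ModuleCat.{0} ℂ)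
  exact ⟨(AddEquiv.ofBijective _ (adj.mapExtAddHom_bijective V W i)).symm⟩
end

section
/- Let 0 → V → U → W → 0 be a split short exact sequence of representations of a finite quiver Γ (e.g., Ext¹_Γ(W,V) = 0), and fix flag types 𝐯, 𝐰 for V and W. For fixed flags (V^r)_r ∈ ℱ_𝐯(V) and (W^r)_r ∈ ℱ_𝐰(W), the fiber of the map ℱ_{𝐯,𝐰}(U) → ℱ_𝐯(V) × ℱ_𝐰(W), φ ↦ (φ ∩ V, π(φ)), over ((V^r), (W^r)) is in natural bijection with the set of families of Γ-morphisms f_r: W^r → V/V^r for r ∈ [1;d] such that for each r ∈ [1;d-1] the square with the inclusions W^r → W^{r+1} and the projections V/V^r → V/V^{r+1} commutes. -/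
/-! Once `U = V ⊕ W` is split, a subspace `P ⊆ V ⊕ W` with `P ∩ V = A` and `π(P) = B` is the
same thing as a linear map `g : B → V/A`: the fibre of `P` over `w ∈ B` is a coset `v + A`, and
`g w = v + A`. Conversely `P = {(v, w) | w ∈ B, v + A = g w}`, so `dim P = dim A + dim B`. Under
this correspondence `P` is stable under an arrow map `V_h ⊕ W_h` exactly when `g` intertwines
`W_h` with the map induced by `V_h` on quotients, and `P^r ⊆ P^{r+1}` exactly when `g_{r+1}`
restricted to `W^r` is `g_r` followed by `V/V^r → V/V^{r+1}`. At the top level `V/V = 0`, so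
`P = U` holds automatically. -/

open Module

/-! Concrete model of quiver representations over `ℂ`. -/

/-- A quiver with vertex set `I` and arrow set `H`; `src`/`tgt` give the source and
target of each arrow. -/
structure FinQuiver (I H : Type) where
  src : H → I
  tgt : H → I

/-- A finite-dimensional complex representation of the quiver `Q`. -/
structure MRep {I H : Type} (Q : FinQuiver I H) where
  M : I → Type
  [acg : ∀ i, AddCommGroup (M i)]
  [mod : ∀ i, Module ℂ (M i)]
  [fd : ∀ i, FiniteDimensional ℂ (M i)]
  map : ∀ h, M (Q.src h) →ₗ[ℂ] M (Q.tgt h)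

attribute [instance] MRep.acg MRep.mod MRep.fd

/-- A family of subspaces is a subrepresentation if it is preserved by all arrow maps. -/
def IsSubrep {I H : Type} {Q : FinQuiver I H} (V : MRep Q)
    (S : ∀ i, Submodule ℂ (V.M i)) : Prop :=
  ∀ h x, x ∈ S (Q.src h) → V.map h x ∈ S (Q.tgt h)

/-- The flag version of the quiver Grassmannian: chains
`V¹ ⊆ V² ⊆ ⋯ ⊆ V^{d+1} = V` of subrepresentations of `V` with prescribed dimension
vectors `dims r`. -/
def FlagVar {I H : Type} {Q : FinQuiver I H} (V : MRep Q) {d : ℕ}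
    (dims : Fin (d + 1) → I → ℕ) : Type :=
  {F : Fin (d + 1) → ∀ i, Submodule ℂ (V.M i) //
    (∀ r, IsSubrep V (F r)) ∧
    (∀ r r' : Fin (d + 1), r ≤ r' → ∀ i, F r i ≤ F r' i) ∧
    (∀ r i, finrank ℂ (F r i) = dims r i) ∧
    (∀ i, F (Fin.last d) i = ⊤)}

/-- The classical topology on the set of subspaces of a finite-dimensional complex vector
space (the disjoint union of the Grassmannians), induced by identifying a subspace with
the orthogonal projection onto its image in a euclidean coordinate space. -/
noncomputable instance submoduleTopology (M : Type) [AddCommGroup M] [Module ℂ M]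
    [FiniteDimensional ℂ M] : TopologicalSpace (Submodule ℂ M) :=
  TopologicalSpace.induced
    (fun K =>
      let e : M ≃ₗ[ℂ] EuclideanSpace ℂ (Fin (finrank ℂ M)) :=
        (Module.finBasis ℂ M).equivFun.trans
          (WithLp.linearEquiv 2 ℂ (Fin (finrank ℂ M) → ℂ)).symm
      let K' : Submodule ℂ (EuclideanSpace ℂ (Fin (finrank ℂ M))) := K.map e.toLinearMap
      (K'.subtypeL.comp K'.orthogonalProjectionOnto :
        EuclideanSpace ℂ (Fin (finrank ℂ M)) →L[ℂ] EuclideanSpace ℂ (Fin (finrank ℂ M))))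
    inferInstance

noncomputable instance flagVarTopology {I H : Type} {Q : FinQuiver I H} (V : MRep Q) {d : ℕ}
    (dims : Fin (d + 1) → I → ℕ) : TopologicalSpace (FlagVar V dims) :=
  instTopologicalSpaceSubtype

/-- An α-partition into affine spaces: a finite partition `X = X₁ ⊔ ⋯ ⊔ X_n` such that
each union `X₁ ⊔ ⋯ ⊔ X_r` is closed and each part `X_r` is (homeomorphic to) an affine
space `ℂ^{m_r}`. -/
def HasAlphaPartitionIntoAffineSpaces (X : Type*) [TopologicalSpace X] : Prop :=
  ∃ (n : ℕ) (p : X → Fin n) (m : Fin n → ℕ),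
    (∀ r : Fin n, IsClosed {x : X | p x ≤ r}) ∧
    (∀ r : Fin n, Nonempty ({x : X // p x = r} ≃ₜ (Fin (m r) → ℂ)))

section Euler

variable {I H : Type} [Fintype I] [Fintype H]

/-- The Euler form `⟨a, b⟩ = ∑ᵢ aᵢ bᵢ − ∑_h a_{h'} b_{h''}` of the quiver `Q`. -/
def eulerForm (Q : FinQuiver I H) (a b : I → ℤ) : ℤ :=
  ∑ i, a i * b i - ∑ h, a (Q.src h) * b (Q.tgt h)

/-- The linear map `⊕ᵢ Hom(Wᵢ, Vᵢ) → ⊕_h Hom(W_{h'}, V_{h''})`,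
`(fᵢ)ᵢ ↦ (f_{h''} ∘ W_h − V_h ∘ f_{h'})_h`, whose kernel is `Hom_Γ(W, V)` and whose
cokernel is `Ext¹_Γ(W, V)`. -/
noncomputable def extDiff {Q : FinQuiver I H} (W V : MRep Q) :
    (∀ i, W.M i →ₗ[ℂ] V.M i) →ₗ[ℂ] (∀ h, W.M (Q.src h) →ₗ[ℂ] V.M (Q.tgt h)) :=
  LinearMap.pi fun h =>
    (LinearMap.lcomp ℂ _ (W.map h)).comp (LinearMap.proj (Q.tgt h)) -
    (LinearMap.llcomp ℂ _ _ _ (V.map h)).comp (LinearMap.proj (Q.src h))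

/-- `Ext¹_Γ(W, V) = 0`, i.e. the cokernel of `extDiff W V` vanishes. -/
def Ext1Vanishes {Q : FinQuiver I H} (W V : MRep Q) : Prop :=
  Function.Surjective (extDiff W V)

end Euler

/-- The direct sum `U = V ⊕ W` of two representations (the middle term of a split short
exact sequence `0 → V → U → W → 0`, after fixing a splitting). -/
noncomputable def prodRep {I H : Type} {Q : FinQuiver I H} (V W : MRep Q) : MRep Q where
  M i := V.M i × W.M i
  acg i := inferInstance
  mod i := inferInstance
  fd i := inferInstance
  map h := (V.map h).prodMap (W.map h)

/-- The fiber of the map `ℱ_{𝐯,𝐰}(U) → ℱ_𝐯(V) × ℱ_𝐰(W)`, `φ ↦ (φ ∩ V, π(φ))`, over a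
fixed pair of flags `(FV, FW)`: flags `φ` of `U = V ⊕ W` of type `𝐯 + 𝐰` with
`φ ∩ V = FV` (in particular `φ ∈ ℱ_{𝐯,𝐰}(U)`) and `π(φ) = FW`. -/
def FiberOver {I H : Type} {Q : FinQuiver I H} {V W : MRep Q} {d : ℕ}
    {dimsV dimsW : Fin (d + 1) → I → ℕ}
    (FV : FlagVar V dimsV) (FW : FlagVar W dimsW) : Type :=
  {FU : FlagVar (prodRep V W) (fun r i => dimsV r i + dimsW r i) //
    (∀ r i, (FU.1 r i).comap (LinearMap.inl ℂ (V.M i) (W.M i)) = FV.1 r i) ∧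
    (∀ r i, (FU.1 r i).map (LinearMap.snd ℂ (V.M i) (W.M i)) = FW.1 r i)}

/-- Families of morphisms of representations `f_r : W^r → V/V^r`, `r ∈ [1;d]`, commuting
with the inclusions `W^r ⊆ W^{r+1}` and the projections `V/V^r → V/V^{r+1}`. -/
def CompatFamilies {I H : Type} {Q : FinQuiver I H} {V W : MRep Q} {d : ℕ}
    {dimsV dimsW : Fin (d + 1) → I → ℕ}
    (FV : FlagVar V dimsV) (FW : FlagVar W dimsW) : Type :=
  {f : ∀ (r : Fin (d + 1)) (i : I), (FW.1 r i) →ₗ[ℂ] (V.M i ⧸ FV.1 r i) //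
    -- each `f_r` is a morphism of representations `W^r → V/V^r`
    (∀ (r : Fin (d + 1)) (h : H),
      (Submodule.mapQ (FV.1 r (Q.src h)) (FV.1 r (Q.tgt h)) (V.map h)
          (fun x hx => FV.2.1 r h x hx)).comp (f r (Q.src h)) =
        (f r (Q.tgt h)).comp
          ((W.map h).restrict (fun x hx => FW.2.1 r h x hx))) ∧
    -- the squares over consecutive levels commute
    (∀ (r : Fin d) (i : I),
      (f r.succ i).comp
          (Submodule.inclusion (FW.2.2.1 r.castSucc r.succ
            (le_of_lt (Fin.castSucc_lt_succ (i := r))) i)) =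
        (Submodule.mapQ (FV.1 r.castSucc i) (FV.1 r.succ i) LinearMap.id
            (fun x hx => FV.2.2.1 r.castSucc r.succ
              (le_of_lt (Fin.castSucc_lt_succ (i := r))) i hx)).comp
          (f r.castSucc i))}

namespace Submodule

variable {R M N M' N' : Type*} [Ring R] [AddCommGroup M] [Module R M] [AddCommGroup N]
  [Module R N] [AddCommGroup M'] [Module R M'] [AddCommGroup N'] [Module R N']
  {A : Submodule R M} {B : Submodule R N} {P : Submodule R (M × N)}
  {A' : Submodule R M'} {B' : Submodule R N'} {P' : Submodule R (M' × N')}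

theorem prod_mem_iff_sub_mem (hA : P.comap (LinearMap.inl R M N) = A) {v v' : M} {w : N}
    (h : (v', w) ∈ P) : (v, w) ∈ P ↔ v - v' ∈ A := by
  rw [← hA, mem_comap, LinearMap.inl_apply]
  exact ⟨fun hv => by simpa using P.sub_mem hv h, fun hv => by simpa using P.add_mem hv h⟩

theorem exists_prod_mem (hB : P.map (LinearMap.snd R M N) = B) {w : N} (hw : w ∈ B) :
    ∃ v, (v, w) ∈ P := by
  obtain ⟨⟨v, w⟩, hp, rfl⟩ := hB ▸ hw
  exact ⟨v, hp⟩

theorem mk_eq_mk_of_prod_mem (hA : P.comap (LinearMap.inl R M N) = A) {v v' : M} {w : N}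
    (h : (v, w) ∈ P) (h' : (v', w) ∈ P) : (Quotient.mk v : M ⧸ A) = Quotient.mk v' :=
  (Quotient.eq A).2 ((prod_mem_iff_sub_mem hA h').1 h)

noncomputable def quotGraphMap (hA : P.comap (LinearMap.inl R M N) = A)
    (hB : P.map (LinearMap.snd R M N) = B) : B →ₗ[R] M ⧸ A where
  toFun w := Quotient.mk (exists_prod_mem hB w.2).choose
  map_add' w w' := by
    rw [← Quotient.mk_add]
    exact mk_eq_mk_of_prod_mem hA (exists_prod_mem hB (w + w').2).choose_spec
      (P.add_mem (exists_prod_mem hB w.2).choose_spec (exists_prod_mem hB w'.2).choose_spec)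
  map_smul' c w := by
    rw [RingHom.id_apply, ← Quotient.mk_smul]
    exact mk_eq_mk_of_prod_mem hA (exists_prod_mem hB (c • w).2).choose_spec
      (P.smul_mem c (exists_prod_mem hB w.2).choose_spec)

theorem quotGraphMap_apply (hA : P.comap (LinearMap.inl R M N) = A)
    (hB : P.map (LinearMap.snd R M N) = B) {v : M} {w : N} (h : (v, w) ∈ P) (hw : w ∈ B) :
    quotGraphMap hA hB ⟨w, hw⟩ = Quotient.mk v :=
  mk_eq_mk_of_prod_mem hA (exists_prod_mem hB hw).choose_spec h

theorem mapQ_comp_quotGraphMap (hA : P.comap (LinearMap.inl R M N) = A)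
    (hB : P.map (LinearMap.snd R M N) = B) (hA' : P'.comap (LinearMap.inl R M' N') = A')
    (hB' : P'.map (LinearMap.snd R M' N') = B') {φ : M →ₗ[R] M'} {ψ : N →ₗ[R] N'}
    (hφ : A ≤ A'.comap φ) (hψ : B ≤ B'.comap ψ) (h : P ≤ P'.comap (φ.prodMap ψ)) :
    A.mapQ A' φ hφ ∘ₗ quotGraphMap hA hB = quotGraphMap hA' hB' ∘ₗ ψ.restrict hψ := by
  ext ⟨w, hw⟩
  obtain ⟨v, hv⟩ := exists_prod_mem hB hw
  rw [LinearMap.comp_apply, quotGraphMap_apply hA hB hv, mapQ_apply]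
  exact (quotGraphMap_apply hA' hB' (h hv) (hψ hw)).symm

theorem quotGraphMap_comp_inclusion {A₁ : Submodule R M} {B₁ : Submodule R N}
    {P₁ : Submodule R (M × N)} (hA : P.comap (LinearMap.inl R M N) = A)
    (hB : P.map (LinearMap.snd R M N) = B) (hA₁ : P₁.comap (LinearMap.inl R M N) = A₁)
    (hB₁ : P₁.map (LinearMap.snd R M N) = B₁) (hAA₁ : A ≤ A₁) (hBB₁ : B ≤ B₁) (h : P ≤ P₁) :
    quotGraphMap hA₁ hB₁ ∘ₗ inclusion hBB₁ = A.mapQ A₁ LinearMap.id hAA₁ ∘ₗ quotGraphMap hA hB :=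
  (mapQ_comp_quotGraphMap (φ := LinearMap.id) (ψ := LinearMap.id) hA hB hA₁ hB₁ hAA₁ hBB₁
    (by rwa [LinearMap.prodMap_id, comap_id])).symm

end Submodule

namespace LinearMap

variable {R M N : Type*} [Ring R] [AddCommGroup M] [Module R M] [AddCommGroup N] [Module R N]
  {A : Submodule R M} {B : Submodule R N}

def quotGraph (g : B →ₗ[R] M ⧸ A) : Submodule R (M × N) where
  carrier := {x | ∃ hx : x.2 ∈ B, Submodule.Quotient.mk x.1 = g ⟨x.2, hx⟩}
  add_mem' := by
    rintro x y ⟨hx, hgx⟩ ⟨hy, hgy⟩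
    refine ⟨B.add_mem hx hy, ?_⟩
    rw [Prod.fst_add, Submodule.Quotient.mk_add, hgx, hgy, ← map_add]
    rfl
  zero_mem' := ⟨B.zero_mem, (Submodule.Quotient.mk_zero A).trans (map_zero g).symm⟩
  smul_mem' := by
    rintro c x ⟨hx, hgx⟩
    refine ⟨B.smul_mem c hx, ?_⟩
    rw [Prod.smul_fst, Submodule.Quotient.mk_smul, hgx, ← map_smul]
    rfl

@[simp]
theorem mem_quotGraph {g : B →ₗ[R] M ⧸ A} {v : M} {w : N} :
    (v, w) ∈ g.quotGraph ↔ ∃ hw : w ∈ B, Submodule.Quotient.mk v = g ⟨w, hw⟩ :=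
  Iff.rfl

theorem comap_inl_quotGraph (g : B →ₗ[R] M ⧸ A) :
    g.quotGraph.comap (inl R M N) = A := by
  ext v
  rw [Submodule.mem_comap, inl_apply, mem_quotGraph, ← Submodule.Quotient.mk_eq_zero A (x := v)]
  exact ⟨fun ⟨_, hv⟩ => hv.trans (map_zero g), fun hv => ⟨B.zero_mem, hv.trans (map_zero g).symm⟩⟩

theorem map_snd_quotGraph (g : B →ₗ[R] M ⧸ A) :
    g.quotGraph.map (snd R M N) = B := by
  ext w
  refine ⟨fun ⟨_, ⟨hw, _⟩, hx⟩ => hx ▸ hw, fun hw => ?_⟩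
  obtain ⟨v, hv⟩ := Submodule.Quotient.mk_surjective A (g ⟨w, hw⟩)
  exact ⟨(v, w), mem_quotGraph.2 ⟨hw, hv⟩, rfl⟩

theorem quotGraph_quotGraphMap {P : Submodule R (M × N)} (hA : P.comap (inl R M N) = A)
    (hB : P.map (snd R M N) = B) : (Submodule.quotGraphMap hA hB).quotGraph = P := by
  ext ⟨v, w⟩
  rw [mem_quotGraph]
  constructor
  · rintro ⟨hw, hv⟩
    obtain ⟨v', hv'⟩ := Submodule.exists_prod_mem hB hw
    rw [Submodule.quotGraphMap_apply hA hB hv', Submodule.Quotient.eq] at hv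
    exact (Submodule.prod_mem_iff_sub_mem hA hv').2 hv
  · intro h
    have hw : w ∈ B := hB ▸ Submodule.mem_map_of_mem h
    exact ⟨hw, (Submodule.quotGraphMap_apply hA hB h hw).symm⟩

theorem quotGraphMap_quotGraph (g : B →ₗ[R] M ⧸ A) :
    Submodule.quotGraphMap (comap_inl_quotGraph g) (map_snd_quotGraph g) = g := by
  ext ⟨w, hw⟩
  obtain ⟨v, hv⟩ := Submodule.Quotient.mk_surjective A (g ⟨w, hw⟩)
  exact (Submodule.quotGraphMap_apply _ _ (mem_quotGraph.2 ⟨hw, hv⟩) hw).trans hv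

theorem quotGraph_eq_top (g : B →ₗ[R] M ⧸ A) (hA : A = ⊤) (hB : B = ⊤) : g.quotGraph = ⊤ := by
  have : Subsingleton (M ⧸ A) := Submodule.Quotient.subsingleton_iff.2 hA
  refine eq_top_iff.2 fun ⟨v, w⟩ _ => mem_quotGraph.2 ⟨?_, Subsingleton.elim _ _⟩
  rw [hB]
  exact Submodule.mem_top

variable {M' N' : Type*} [AddCommGroup M'] [Module R M'] [AddCommGroup N'] [Module R N']
  {A' : Submodule R M'} {B' : Submodule R N'}

theorem quotGraph_le_comap_prodMap {g : B →ₗ[R] M ⧸ A} {g' : B' →ₗ[R] M' ⧸ A'}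
    {φ : M →ₗ[R] M'} {ψ : N →ₗ[R] N'} (hφ : A ≤ A'.comap φ) (hψ : B ≤ B'.comap ψ)
    (h : A.mapQ A' φ hφ ∘ₗ g = g' ∘ₗ ψ.restrict hψ) :
    g.quotGraph ≤ g'.quotGraph.comap (φ.prodMap ψ) := by
  rintro ⟨v, w⟩ ⟨hw, hv⟩
  refine ⟨hψ hw, ?_⟩
  have := LinearMap.congr_fun h ⟨w, hw⟩
  rwa [comp_apply, ← hv, Submodule.mapQ_apply] at this

theorem quotGraph_le_quotGraph {A₁ : Submodule R M} {B₁ : Submodule R N}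
    {g : B →ₗ[R] M ⧸ A} {g₁ : B₁ →ₗ[R] M ⧸ A₁} (hA : A ≤ A₁) (hB : B ≤ B₁)
    (h : g₁ ∘ₗ Submodule.inclusion hB = A.mapQ A₁ id hA ∘ₗ g) : g.quotGraph ≤ g₁.quotGraph := by
  simpa only [prodMap_id, Submodule.comap_id] using
    quotGraph_le_comap_prodMap (φ := id) (ψ := id) hA hB h.symm

end LinearMap

section FiniteDimensional

variable {K M N : Type*} [DivisionRing K] [AddCommGroup M] [Module K M] [AddCommGroup N]
  [Module K N] [FiniteDimensional K M] [FiniteDimensional K N]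

theorem Submodule.finrank_comap_inl_add_finrank_map_snd (P : Submodule K (M × N)) :
    finrank K (P.comap (LinearMap.inl K M N)) + finrank K (P.map (LinearMap.snd K M N)) =
      finrank K P := by
  rw [add_comm, ← LinearMap.range_domRestrict, ← LinearMap.finrank_range_add_finrank_ker
    ((LinearMap.snd K M N).domRestrict P), LinearMap.ker_domRestrict,
    ← finrank_map_subtype_eq, map_comap_subtype, LinearMap.ker_snd, inf_comm, ← map_comap_eq,
    ← (equivMapOfInjective (LinearMap.inl K M N) LinearMap.inl_injective _).finrank_eq]

theorem LinearMap.finrank_quotGraph {A : Submodule K M} {B : Submodule K N}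
    (g : B →ₗ[K] M ⧸ A) : finrank K g.quotGraph = finrank K A + finrank K B := by
  rw [← Submodule.finrank_comap_inl_add_finrank_map_snd, comap_inl_quotGraph, map_snd_quotGraph]

end FiniteDimensional

section Flags

open LinearMap

variable {I H : Type} {Q : FinQuiver I H} {V W : MRep Q} {d : ℕ}
  {dimsV dimsW : Fin (d + 1) → I → ℕ} {FV : FlagVar V dimsV} {FW : FlagVar W dimsW}

noncomputable def FiberOver.toCompatFamilies (FU : FiberOver FV FW) : CompatFamilies FV FW :=
  ⟨fun r i => Submodule.quotGraphMap (FU.2.1 r i) (FU.2.2 r i),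
    fun r h => Submodule.mapQ_comp_quotGraphMap _ _ _ _ _ _ (FU.1.2.1 r h),
    fun r i => Submodule.quotGraphMap_comp_inclusion _ _ _ _ _ _
      (FU.1.2.2.1 r.castSucc r.succ Fin.castSucc_lt_succ.le i)⟩

noncomputable def CompatFamilies.toFiberOver (f : CompatFamilies FV FW) : FiberOver FV FW :=
  ⟨⟨fun r i => (f.1 r i).quotGraph,
      fun r h => quotGraph_le_comap_prodMap _ _ (f.2.1 r h),
      (Fin.monotone_iff_le_succ (f := fun r i => (f.1 r i).quotGraph)).2 fun r i =>
        quotGraph_le_quotGraph _ _ (f.2.2 r i),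
      fun r i =>
        (finrank_quotGraph _).trans (congrArg₂ (· + ·) (FV.2.2.2.1 r i) (FW.2.2.2.1 r i)),
      fun i => quotGraph_eq_top _ (FV.2.2.2.2 i) (FW.2.2.2.2 i)⟩,
    fun _ _ => comap_inl_quotGraph _, fun _ _ => map_snd_quotGraph _⟩

noncomputable def fiberOverEquivCompatFamilies : FiberOver FV FW ≃ CompatFamilies FV FW where
  toFun := FiberOver.toCompatFamilies
  invFun := CompatFamilies.toFiberOver
  left_inv FU := Subtype.ext <| Subtype.ext <| funext₂ fun r i =>
    quotGraph_quotGraphMap (FU.2.1 r i) (FU.2.2 r i)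
  right_inv f := Subtype.ext <| funext₂ fun r i => quotGraphMap_quotGraph (f.1 r i)

end Flags

/-- Let `0 → V → U → W → 0` be a split short exact sequence of
representations (realized as `U = V ⊕ W`), and fix flags `(V^r)_r ∈ ℱ_𝐯(V)`,
`(W^r)_r ∈ ℱ_𝐰(W)`.  The fiber of `ℱ_{𝐯,𝐰}(U) → ℱ_𝐯(V) × ℱ_𝐰(W)`,
`φ ↦ (φ ∩ V, π(φ))`, over `((V^r), (W^r))` is in natural bijection with the set of
families of morphisms `f_r : W^r → V/V^r` of representations, `r ∈ [1;d]`, such that all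
squares formed with the inclusions `W^r → W^{r+1}` and projections `V/V^r → V/V^{r+1}`
commute. -/
theorem statement15 {I H : Type} {Q : FinQuiver I H} (V W : MRep Q) {d : ℕ}
    (dimsV dimsW : Fin (d + 1) → I → ℕ)
    (FV : FlagVar V dimsV) (FW : FlagVar W dimsW) :
    Nonempty (FiberOver FV FW ≃ CompatFamilies FV FW) :=
  ⟨fiberOverEquivCompatFamilies⟩
end
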